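/- arXiv:1607.08640 — 4 statements merged into one kernel-verified Lean document; each statement's English description precedes it below -/
import Mathlib

section
/- The seminorm f ↦ sup_{z ∈ G} v(z)|f(z)| on the space H^∞_v(G) of holomorphic functions f on G with sup_{z∈G} v(z)|f(z)| < ∞ is a norm if and only if the set E_v = {z ∈ G : v(z) > 0} has an accumulation point in G. -/
open Complex Metric Set Filter Topology MeasureTheory

noncomputable section

/-- `f` is holomorphic on `G` and `sup_{z in G} v z * |f z| < ∞`. -/
def MemHv (G : Set ℂ) (v : ℂ → ℝ) (f : ℂ → ℂ) : Prop :=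
  DifferentiableOn ℂ f G ∧ ∃ C : ℝ, ∀ z ∈ G, v z * ‖f z‖ ≤ C

/-- The weighted sup-seminorm `‖f‖_v`. -/
def HvNorm (G : Set ℂ) (v : ℂ → ℝ) (f : ℂ → ℂ) : ℝ :=
  sSup ((fun z => v z * ‖f z‖) '' G)

/-- A `‖·‖_v`-Cauchy sequence. -/
def HvCauchy (G : Set ℂ) (v : ℂ → ℝ) (F : ℕ → ℂ → ℂ) : Prop :=
  ∀ ε : ℝ, 0 < ε → ∃ N : ℕ, ∀ m ≥ N, ∀ n ≥ N, ∀ z ∈ G,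
    v z * ‖F m z - F n z‖ ≤ ε

/-- Convergence in the `‖·‖_v`-seminorm. -/
def HvTendsto (G : Set ℂ) (v : ℂ → ℝ) (F : ℕ → ℂ → ℂ) (f : ℂ → ℂ) : Prop :=
  ∀ ε : ℝ, 0 < ε → ∃ N : ℕ, ∀ n ≥ N, ∀ z ∈ G,
    v z * ‖F n z - f z‖ ≤ ε

/-- Completeness of `H^∞_v(G)`: every Cauchy sequence converges in the space. -/
def HvComplete (G : Set ℂ) (v : ℂ → ℝ) : Prop :=
  ∀ F : ℕ → ℂ → ℂ, (∀ n, MemHv G v (F n)) → HvCauchy G v F →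
    ∃ f : ℂ → ℂ, MemHv G v f ∧ HvTendsto G v F f

/-- The seminorm `‖·‖_v` is a norm: `‖f‖_v = 0` forces `f = 0` on `G`. -/
def HvNormed (G : Set ℂ) (v : ℂ → ℝ) : Prop :=
  ∀ f : ℂ → ℂ, MemHv G v f → (∀ z ∈ G, v z * ‖f z‖ = 0) →
    ∀ z ∈ G, f z = 0

/-- `H^∞_v(G)` is a Banach space. -/
def IsBanachHv (G : Set ℂ) (v : ℂ → ℝ) : Prop :=
  HvNormed G v ∧ HvComplete G v

/-!
If `E_v` accumulates at a point of `G`, the identity theorem forces every `f` with `‖f‖_v = 0`,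
i.e. every `f` vanishing on `E_v`, to vanish on `G`. Otherwise `E_v` is a countable set without
accumulation points in `G`, and a Weierstrass-type product (Rudin, *Real and Complex Analysis*,
15.11) produces a holomorphic `f` on `G` vanishing on `E_v` with `f p = 1` at some `p ∈ G \ E_v`.
The inversion `z ↦ (z - p)⁻¹` makes `E_v` bounded; for each `w ∈ E_v` one takes a point `b_w`
outside the image of `G` nearest to `(w - p)⁻¹`. The factor attached to `w` is `1` at `w`, `0` at
`p`, and on a compact `K ⊆ G` bounded by `C_K` times that distance, which tends to `0` along
`E_v`. Raising the factors to distinct powers `k + 1` makes the product converge locally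
uniformly.
-/

theorem Set.Countable.of_forall_not_accPt {X : Type*} [TopologicalSpace X]
    [HereditarilyLindelofSpace X] {E : Set X} (hE : ∀ z ∈ E, ¬AccPt z (𝓟 E)) : E.Countable :=
  (HereditarilyLindelofSpace.isLindelof E).countable_of_isDiscrete
    (isDiscrete_iff_nhdsNE.mpr fun z hz => not_neBot.mp (hE z hz))

theorem finite_inter_of_isCompact_of_forall_not_accPt {X : Type*} [TopologicalSpace X]
    {E G K : Set X} (hE : ∀ z ∈ G, ¬AccPt z (𝓟 E)) (hK : IsCompact K) (hKG : K ⊆ G) :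
    (E ∩ K).Finite := by
  by_contra hinf
  obtain ⟨z, hzK, hz⟩ := Set.Infinite.exists_accPt_of_subset_isCompact hinf hK inter_subset_right
  exact hE z (hKG hzK) (hz.mono (principal_mono.mpr inter_subset_left))

theorem exists_pos_forall_le_dist_of_not_accPt {X : Type*} [PseudoMetricSpace X] {E : Set X}
    {x : X} (h : ¬AccPt x (𝓟 E)) (hx : x ∉ E) : ∃ ε > 0, ∀ y ∈ E, ε ≤ dist y x := by
  rw [accPt_iff_frequently, not_frequently] at h
  obtain ⟨ε, hε, hεx⟩ := Metric.eventually_nhds_iff.mp h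
  exact ⟨ε, hε, fun y hy => not_lt.mp fun hyx => hεx hyx ⟨ne_of_mem_of_not_mem hy hx, hy⟩⟩

theorem exists_differentiableOn_eq_zero_of_eq_one {ι : Type*} [Countable ι] {G : Set ℂ}
    (hG : IsOpen G) (W : ι → ℂ → ℂ) (hW : ∀ i, DifferentiableOn ℂ (W i) G)
    (hsmall : ∀ K ⊆ G, IsCompact K → ∀ᶠ i in cofinite, ∀ z ∈ K, ‖W i z‖ ≤ 1 / 2) :
    ∃ f : ℂ → ℂ, DifferentiableOn ℂ f G ∧ (∀ z ∈ G, ∀ i, W i z = 1 → f z = 0) ∧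
      ∀ z, (∀ i, W i z = 0) → f z = 1 := by
  obtain ⟨k, hk⟩ := Countable.exists_injective_nat ι
  have hsum : Summable fun i => (1 / 2 : ℝ) ^ (k i + 1) :=
    (summable_geometric_two.mul_right (1 / 2)).comp_injective hk |>.congr fun i => by
      simp [pow_succ]
  have hprod : HasProdLocallyUniformlyOn (fun i z => 1 + -W i z ^ (k i + 1))
      (fun z => ∏' i, (1 + -W i z ^ (k i + 1))) G := by
    refine hasProdLocallyUniformlyOn_of_forall_compact hG fun K hKG hK => ?_
    refine hsum.hasProdUniformlyOn_one_add hK ?_ fun i => ((hW i).continuousOn.pow _).neg.mono hKG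
    filter_upwards [hsmall K hKG hK] with i hi z hz
    rw [norm_neg, norm_pow]
    exact pow_le_pow_left₀ (norm_nonneg _) (hi z hz) _
  refine ⟨_, hprod.differentiableOn (.of_forall fun s => ?_) hG, fun z hz i hi => ?_,
    fun z hz => by simp [hz]⟩
  · simpa [Finset.prod_fn] using DifferentiableOn.finsetProd fun i _ =>
      (differentiableOn_const 1).add ((hW i).pow _).neg
  · exact (hprod.hasProd hz).unique (hasProd_zero_of_exists_eq_zero ⟨i, by simp [hi]⟩)

/-- The image of `G \ {p}` under `z ↦ (z - p)⁻¹`; the point `p` goes to `∞`. -/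
def inversionImage (p : ℂ) (G : Set ℂ) : Set ℂ := {ζ | ζ ≠ 0 ∧ p + ζ⁻¹ ∈ G}

/-- With `a = (w - p)⁻¹`, this is `(a - b) / ((z - p)⁻¹ - b)`, written so that it is visibly
holomorphic at `z = p`, where it vanishes. -/
def zeroFactor (p a b z : ℂ) : ℂ := (a - b) * (z - p) / (1 - b * (z - p))

section Inversion

variable {G : Set ℂ} {p : ℂ}

theorem isOpen_inversionImage (hG : IsOpen G) : IsOpen (inversionImage p G) :=
  (continuousOn_const.add (continuousOn_inv₀ (G₀ := ℂ))).isOpen_inter_preimage isOpen_ne hG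

theorem one_sub_mul_sub_ne_zero {b z : ℂ} (hb : b ∉ inversionImage p G) (hz : z ∈ G) :
    1 - b * (z - p) ≠ 0 := by
  intro h
  have hbz : b⁻¹ = z - p := by
    rw [inv_eq_of_mul_eq_one_left]; linear_combination -h
  exact hb ⟨by rintro rfl; simp at h, by simpa [hbz] using hz⟩

theorem zeroFactor_center (a b : ℂ) : zeroFactor p a b p = 0 := by simp [zeroFactor]

theorem zeroFactor_inv_sub {b w : ℂ} (hw : w ≠ p) (hb : 1 - b * (w - p) ≠ 0) :
    zeroFactor p (w - p)⁻¹ b w = 1 := by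
  have : w - p ≠ 0 := sub_ne_zero.mpr hw
  rw [zeroFactor, div_eq_one_iff_eq hb]
  field_simp

theorem differentiableOn_zeroFactor {a b : ℂ} (hb : b ∉ inversionImage p G) :
    DifferentiableOn ℂ (zeroFactor p a b) G :=
  DifferentiableOn.div (by fun_prop) (by fun_prop) fun _ hz => one_sub_mul_sub_ne_zero hb hz

theorem exists_norm_zeroFactor_le (hG : IsOpen G) {K : Set ℂ} (hK : IsCompact K) (hKG : K ⊆ G)
    (R : ℝ) : ∃ C > 0, ∀ b ∉ inversionImage p G, ‖b‖ ≤ R → ∀ a, ∀ z ∈ K,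
      ‖zeroFactor p a b z‖ ≤ C * ‖a - b‖ := by
  have hS : IsCompact ((closedBall 0 R ∩ (inversionImage p G)ᶜ) ×ˢ K) :=
    ((isCompact_closedBall 0 R).inter_right (isOpen_inversionImage hG).isClosed_compl).prod hK
  obtain ⟨m, hm, hmS⟩ := hS.exists_forall_le' (f := fun x => ‖1 - x.1 * (x.2 - p)‖)
    (by fun_prop) fun x hx =>
      norm_pos_iff.mpr (one_sub_mul_sub_ne_zero (b := x.1) hx.1.2 (hKG hx.2))
  obtain ⟨M, hM⟩ := hK.exists_bound_of_continuousOn (f := fun z => z - p) (by fun_prop)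
  refine ⟨max M 1 / m, by positivity, fun b hb hbR a z hz => ?_⟩
  have hden := hmS (b, z) ⟨⟨by simpa using hbR, hb⟩, hz⟩
  rw [zeroFactor, norm_div, norm_mul, div_mul_eq_mul_div, mul_comm (max M 1)]
  exact div_le_div₀ (by positivity)
    (mul_le_mul_of_nonneg_left ((hM z hz).trans (le_max_left _ _)) (norm_nonneg _)) hm hden

theorem finite_setOf_le_infDist_inv_sub {E : Set ℂ} (hE : ∀ z ∈ G, ¬AccPt z (𝓟 E)) (R : ℝ)
    {c : ℝ} (hc : 0 < c) :
    {w ∈ E | ‖(w - p)⁻¹‖ ≤ R ∧ c ≤ infDist (w - p)⁻¹ (inversionImage p G)ᶜ}.Finite := by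
  set S := closedBall 0 R ∩ {ζ | c ≤ infDist ζ (inversionImage p G)ᶜ}
  have hSsub : S ⊆ inversionImage p G := fun ζ hζ => by
    by_contra h
    have : c ≤ 0 := infDist_zero_of_mem (x := ζ) (s := (inversionImage p G)ᶜ) h ▸ hζ.2
    linarith
  have hS : IsCompact S := (isCompact_closedBall 0 R).inter_right
    (isClosed_le continuous_const (continuous_infDist_pt _))
  have hK : IsCompact ((fun ζ => p + ζ⁻¹) '' S) := hS.image_of_continuousOn
    (continuousOn_const.add (continuousOn_inv₀.mono fun ζ hζ => (hSsub hζ).1))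
  refine (finite_inter_of_isCompact_of_forall_not_accPt hE hK
    (image_subset_iff.mpr fun ζ hζ => (hSsub hζ).2)).subset ?_
  rintro w ⟨hw, hwR, hwc⟩
  exact ⟨hw, (w - p)⁻¹, ⟨by simpa using hwR, hwc⟩, by simp⟩

theorem eventually_cofinite_norm_zeroFactor_le {E K : Set ℂ} (hG : IsOpen G)
    (hE : ∀ z ∈ G, ¬AccPt z (𝓟 E)) (hK : IsCompact K) (hKG : K ⊆ G) {R : ℝ} (b : E → ℂ)
    (hbG : ∀ w, b w ∉ inversionImage p G) (hbR : ∀ w, ‖b w‖ ≤ R)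
    (haR : ∀ w : E, ‖((w : ℂ) - p)⁻¹‖ ≤ R)
    (hb : ∀ w : E, ‖((w : ℂ) - p)⁻¹ - b w‖ = infDist ((w : ℂ) - p)⁻¹ (inversionImage p G)ᶜ) :
    ∀ᶠ w : E in cofinite, ∀ z ∈ K, ‖zeroFactor p ((w : ℂ) - p)⁻¹ (b w) z‖ ≤ 1 / 2 := by
  obtain ⟨C, hC, hCb⟩ := exists_norm_zeroFactor_le (p := p) hG hK hKG R
  have hfin := finite_setOf_le_infDist_inv_sub (p := p) hE R (inv_pos.mpr (mul_pos two_pos hC))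
  refine eventually_cofinite.mpr ((hfin.preimage Subtype.val_injective.injOn).subset ?_)
  intro w hw
  refine ⟨w.2, haR w, ?_⟩
  obtain ⟨z, hz, hWz⟩ := not_forall₂.mp hw
  by_contra! hδ
  have hWb := hCb (b w) (hbG w) (hbR w) ((w : ℂ) - p)⁻¹ z hz
  have : C * ‖((w : ℂ) - p)⁻¹ - b w‖ < 1 / 2 :=
    calc _ < C * (2 * C)⁻¹ := by rw [hb w]; gcongr
      _ = 1 / 2 := by field_simp
  linarith

theorem exists_differentiableOn_eq_zero_of_forall_not_accPt {E : Set ℂ} (hG : IsOpen G)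
    (hEG : E ⊆ G) (hE : ∀ z ∈ G, ¬AccPt z (𝓟 E)) (hp : p ∈ G) (hpE : p ∉ E) :
    ∃ f : ℂ → ℂ, DifferentiableOn ℂ f G ∧ (∀ w ∈ E, f w = 0) ∧ f p = 1 := by
  have h0 : (0 : ℂ) ∈ (inversionImage p G)ᶜ := fun h => h.1 rfl
  obtain ⟨ε, hε, hεE⟩ := exists_pos_forall_le_dist_of_not_accPt (hE p hp) hpE
  have ha : ∀ w : E, ‖((w : ℂ) - p)⁻¹‖ ≤ ε⁻¹ := fun w => by
    rw [norm_inv, ← dist_eq_norm]; exact inv_anti₀ hε (hεE w w.2)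
  have := (Set.Countable.of_forall_not_accPt fun z hz => hE z (hEG hz)).to_subtype
  choose b hbG hb using fun w : E =>
    (isOpen_inversionImage hG).isClosed_compl.exists_infDist_eq_dist ⟨0, h0⟩ ((w - p : ℂ)⁻¹)
  have hb' : ∀ w : E, ‖((w : ℂ) - p)⁻¹ - b w‖ = infDist ((w : ℂ) - p)⁻¹ (inversionImage p G)ᶜ :=
    fun w => by rw [hb w, dist_eq_norm]
  have hbR : ∀ w : E, ‖b w‖ ≤ 2 * ε⁻¹ := fun w => by
    have h1 := infDist_le_dist_of_mem (x := ((w : ℂ) - p)⁻¹) h0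
    have h2 := norm_le_norm_add_norm_sub' (b w) ((w : ℂ) - p)⁻¹
    rw [dist_zero_right, ← hb', ← norm_neg, neg_sub] at h1
    linarith [ha w]
  obtain ⟨f, hf, hf0, hf1⟩ := exists_differentiableOn_eq_zero_of_eq_one hG
    (fun w : E => zeroFactor p ((w : ℂ) - p)⁻¹ (b w))
    (fun w => differentiableOn_zeroFactor (hbG w)) fun K hKG hK =>
      eventually_cofinite_norm_zeroFactor_le hG hE hK hKG b hbG hbR
        (fun w => (ha w).trans (by linarith [inv_pos.mpr hε])) hb'
  refine ⟨f, hf, fun w hw => hf0 w (hEG hw) ⟨w, hw⟩ ?_, hf1 p fun w => zeroFactor_center _ _⟩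
  exact zeroFactor_inv_sub (ne_of_mem_of_not_mem hw hpE)
    (one_sub_mul_sub_ne_zero (hbG _) (hEG hw))

end Inversion

theorem stmt0 (G : Set ℂ) (v : ℂ → ℝ) (hG : IsOpen G) (hGc : IsConnected G)
    (hv : ∀ z ∈ G, 0 ≤ v z) :
    HvNormed G v ↔ ∃ z ∈ G, AccPt z (𝓟 {w ∈ G | 0 < v w}) := by
  set E := {w ∈ G | 0 < v w}
  constructor
  · intro hnorm
    by_contra! hE
    have hEc : E.Countable := .of_forall_not_accPt fun z hz => hE z hz.1
    obtain ⟨p, hpG, hpE⟩ := (hEc.dense_compl ℂ).inter_open_nonempty G hG hGc.nonempty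
    obtain ⟨f, hf, hfE, hfp⟩ :=
      exists_differentiableOn_eq_zero_of_forall_not_accPt hG (sep_subset _ _) hE hpG hpE
    have hvf : ∀ z ∈ G, v z * ‖f z‖ = 0 := fun z hz => by
      rcases (hv z hz).lt_or_eq with hvz | hvz
      · simp [hfE z ⟨hz, hvz⟩]
      · simp [← hvz]
    exact one_ne_zero (hfp ▸ hnorm f ⟨hf, 0, fun z hz => (hvf z hz).le⟩ hvf p hpG)
  · rintro ⟨z₀, hz₀, hacc⟩ f ⟨hf, -⟩ hvf
    have hfE : ∀ w ∈ E, f w = 0 := fun w hw =>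
      norm_eq_zero.mp ((mul_eq_zero.mp (hvf w hw.1)).resolve_left hw.2.ne')
    refine (hf.analyticOnNhd hG).eqOn_zero_of_preconnected_of_frequently_eq_zero
      hGc.isPreconnected hz₀ ?_
    rw [accPt_iff_frequently_nhdsNE] at hacc
    exact hacc.mono hfE
end
end

section
/- The space H^∞_v(G) is a Banach space if and only if for each z ∈ G the evaluation functional δ_z is bounded on H^∞_v(G) and sup_{z∈K} ‖δ_z‖'_v < ∞ for every compact subset K of G. -/
/-!
Completeness gives the bounds. `H^∞_v(G)` is then a Banach space (`‖f‖_v = 0` forces `f = 0` by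
the identity theorem at an accumulation point of `{v > 0}`), so by the closed graph theorem the
restriction map to bounded continuous functions on a ball `B` with closure in `G` is bounded as
soon as its graph is closed. A uniform limit of restrictions is holomorphic on `B` and agrees with
the `‖·‖_v`-limit wherever point evaluations are already known to be bounded; when such points
accumulate in `B`, the identity theorem closes the graph. Starting from the points where `v > 0`,
this spreads bounds over balls through the connected set `G`, and compactness does the rest.

Conversely, bounds on compacts make a `‖·‖_v`-Cauchy sequence locally uniformly Cauchy, so it
converges locally uniformly to a holomorphic function, which is also its `‖·‖_v`-limit.
-/

open Complex Metric Set Filter Topology MeasureTheory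

noncomputable section

open scoped BoundedContinuousFunction

variable {G : Set ℂ} {v : ℂ → ℝ}

section Basic

variable {f g : ℂ → ℂ}

lemma le_hvNorm (hf : MemHv G v f) {z : ℂ} (hz : z ∈ G) : v z * ‖f z‖ ≤ HvNorm G v f := by
  obtain ⟨C, hC⟩ := hf.2
  exact le_csSup ⟨C, by rintro _ ⟨w, hw, rfl⟩; exact hC w hw⟩ ⟨z, hz, rfl⟩

lemma hvNorm_le {C : ℝ} (hC₀ : 0 ≤ C) (hC : ∀ z ∈ G, v z * ‖f z‖ ≤ C) : HvNorm G v f ≤ C :=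
  Real.sSup_le (by rintro _ ⟨z, hz, rfl⟩; exact hC z hz) hC₀

lemma hvNorm_nonneg (hv : ∀ z ∈ G, 0 ≤ v z) (f : ℂ → ℂ) : 0 ≤ HvNorm G v f :=
  Real.sSup_nonneg (by rintro _ ⟨z, hz, rfl⟩; exact mul_nonneg (hv z hz) (norm_nonneg _))

lemma hvNorm_congr (h : EqOn f g G) : HvNorm G v f = HvNorm G v g := by
  unfold HvNorm
  rw [image_congr fun z hz => by rw [h hz]]

lemma hvNorm_smul (c : ℂ) (f : ℂ → ℂ) : HvNorm G v (c • f) = ‖c‖ * HvNorm G v f := by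
  simp only [HvNorm, sSup_image', Real.mul_iSup_of_nonneg (norm_nonneg c), Pi.smul_apply,
    smul_eq_mul, norm_mul]
  congr 1 with z
  ring

lemma MemHv.congr (hf : MemHv G v f) (h : EqOn f g G) : MemHv G v g := by
  obtain ⟨C, hC⟩ := hf.2
  exact ⟨hf.1.congr fun z hz => (h hz).symm, C, fun z hz => h hz ▸ hC z hz⟩

lemma mul_norm_add_le_hvNorm_add (hv : ∀ z ∈ G, 0 ≤ v z) (hf : MemHv G v f)
    (hg : MemHv G v g) {z : ℂ} (hz : z ∈ G) :
    v z * ‖(f + g) z‖ ≤ HvNorm G v f + HvNorm G v g :=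
  calc v z * ‖f z + g z‖ ≤ v z * ‖f z‖ + v z * ‖g z‖ := by
        rw [← mul_add]; exact mul_le_mul_of_nonneg_left (norm_add_le _ _) (hv z hz)
    _ ≤ _ := add_le_add (le_hvNorm hf hz) (le_hvNorm hg hz)

lemma MemHv.add (hv : ∀ z ∈ G, 0 ≤ v z) (hf : MemHv G v f) (hg : MemHv G v g) :
    MemHv G v (f + g) :=
  ⟨hf.1.add hg.1, _, fun _ => mul_norm_add_le_hvNorm_add hv hf hg⟩

lemma hvNorm_add_le (hv : ∀ z ∈ G, 0 ≤ v z) (hf : MemHv G v f) (hg : MemHv G v g) :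
    HvNorm G v (f + g) ≤ HvNorm G v f + HvNorm G v g :=
  hvNorm_le (add_nonneg (hvNorm_nonneg hv f) (hvNorm_nonneg hv g)) fun _ =>
    mul_norm_add_le_hvNorm_add hv hf hg

lemma MemHv.const_smul (hf : MemHv G v f) (c : ℂ) : MemHv G v (c • f) :=
  ⟨hf.1.const_smul c, ‖c‖ * HvNorm G v f, fun z hz => by
    rw [Pi.smul_apply, smul_eq_mul, norm_mul, mul_left_comm]
    exact mul_le_mul_of_nonneg_left (le_hvNorm hf hz) (norm_nonneg c)⟩

lemma memHv_zero : MemHv G v 0 :=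
  ⟨differentiableOn_const 0, 0, fun z _ => by simp⟩

variable (G v) in
def hvSubmodule (hv : ∀ z ∈ G, 0 ≤ v z) : Submodule ℂ (ℂ → ℂ) where
  carrier := {f | MemHv G v f}
  add_mem' := MemHv.add hv
  zero_mem' := memHv_zero
  smul_mem' c _ hf := hf.const_smul c

lemma MemHv.sub (hv : ∀ z ∈ G, 0 ≤ v z) (hf : MemHv G v f) (hg : MemHv G v g) :
    MemHv G v (f - g) :=
  (hvSubmodule G v hv).sub_mem hf hg

end Basic

variable (G v) in
def HvEvalBoundedOn (s : Set ℂ) : Prop :=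
  ∃ C : ℝ, ∀ z ∈ s, ∀ f : ℂ → ℂ, MemHv G v f → ‖f z‖ ≤ C * HvNorm G v f

section EvalBounds

variable {s t : Set ℂ}

lemma HvEvalBoundedOn.mono (ht : HvEvalBoundedOn G v t) (hst : s ⊆ t) : HvEvalBoundedOn G v s :=
  let ⟨C, hC⟩ := ht
  ⟨C, fun z hz => hC z (hst hz)⟩

lemma HvEvalBoundedOn.union (hv : ∀ z ∈ G, 0 ≤ v z) (hs : HvEvalBoundedOn G v s)
    (ht : HvEvalBoundedOn G v t) : HvEvalBoundedOn G v (s ∪ t) := by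
  obtain ⟨C, hC⟩ := hs
  obtain ⟨C', hC'⟩ := ht
  refine ⟨max C C', fun z hz f hf => ?_⟩
  have hN := hvNorm_nonneg hv f
  rcases hz with hz | hz
  · exact (hC z hz f hf).trans (mul_le_mul_of_nonneg_right (le_max_left C C') hN)
  · exact (hC' z hz f hf).trans (mul_le_mul_of_nonneg_right (le_max_right C C') hN)

lemma hvEvalBoundedOn_empty : HvEvalBoundedOn G v ∅ :=
  ⟨0, fun _ hz => hz.elim⟩

lemma hvEvalBoundedOn_singleton_of_pos {z : ℂ} (hz : z ∈ G) (hvz : 0 < v z) :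
    HvEvalBoundedOn G v {z} :=
  ⟨(v z)⁻¹, fun _ hy _ hf => hy ▸ (le_inv_mul_iff₀ hvz).2 (le_hvNorm hf hz)⟩

lemma IsCompact.hvEvalBoundedOn (hv : ∀ z ∈ G, 0 ≤ v z) {K : Set ℂ} (hK : IsCompact K)
    (h : ∀ z ∈ K, ∃ U ∈ 𝓝 z, HvEvalBoundedOn G v U) : HvEvalBoundedOn G v K :=
  hK.induction_on hvEvalBoundedOn_empty (fun _ _ hst ht => ht.mono hst)
    (fun _ _ => HvEvalBoundedOn.union hv) fun z hz =>
      let ⟨U, hU, hUb⟩ := h z hz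
      ⟨U, mem_nhdsWithin_of_mem_nhds hU, hUb⟩

end EvalBounds

lemma hvNormed_of_frequently (hG : IsOpen G) (hGc : IsPreconnected G) {z₀ : ℂ} (hz₀ : z₀ ∈ G)
    (hacc : ∃ᶠ y in 𝓝[≠] z₀, y ∈ {w ∈ G | 0 < v w}) : HvNormed G v := by
  intro f hf h0 z hz
  refine (hf.1.analyticOnNhd hG).eqOn_zero_of_preconnected_of_frequently_eq_zero hGc hz₀
    (hacc.mono fun y ⟨hyG, hvy⟩ => ?_) hz
  exact norm_eq_zero.1 ((mul_eq_zero.1 (h0 y hyG)).resolve_left hvy.ne')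

variable (G v) in
/-- The functions of `H^∞_v(G)` that vanish off `G`, on which `HvNorm` is a norm. It is a type
synonym, so that it does not inherit the topology of pointwise convergence from `ℂ → ℂ`. -/
def HvSpace (hv : ∀ z ∈ G, 0 ≤ v z) : Type :=
  ↥(hvSubmodule G v hv ⊓ Submodule.pi Gᶜ fun _ => ⊥)

namespace HvSpace

variable {hv : ∀ z ∈ G, 0 ≤ v z}

instance : AddCommGroup (HvSpace G v hv) :=
  inferInstanceAs (AddCommGroup ↥(hvSubmodule G v hv ⊓ Submodule.pi Gᶜ fun _ => ⊥))

instance : Module ℂ (HvSpace G v hv) :=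
  inferInstanceAs (Module ℂ ↥(hvSubmodule G v hv ⊓ Submodule.pi Gᶜ fun _ => ⊥))

instance : FunLike (HvSpace G v hv) ℂ ℂ where
  coe F := Subtype.val (p := (· ∈ hvSubmodule G v hv ⊓ Submodule.pi Gᶜ fun _ => ⊥)) F
  coe_injective := Subtype.val_injective

instance : Norm (HvSpace G v hv) := ⟨fun F => HvNorm G v F⟩

lemma norm_def (F : HvSpace G v hv) : ‖F‖ = HvNorm G v F := rfl

@[simp] lemma coe_sub (F F' : HvSpace G v hv) : ⇑(F - F') = F - F' := rfl
@[simp] lemma coe_zero : ⇑(0 : HvSpace G v hv) = 0 := rfl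

lemma memHv (F : HvSpace G v hv) : MemHv G v F := F.2.1

lemma eq_zero_of_notMem (F : HvSpace G v hv) {z : ℂ} (hz : z ∉ G) : F z = 0 :=
  Submodule.mem_bot ℂ |>.1 (Submodule.mem_pi.1 F.2.2 z hz)

variable (hv) in
def ofMemHv {f : ℂ → ℂ} (hf : MemHv G v f) : HvSpace G v hv :=
  ⟨G.indicator f, hf.congr fun _ hz => (indicator_of_mem hz f).symm,
    Submodule.mem_pi.2 fun _ hz => (Submodule.mem_bot ℂ).2 (indicator_of_notMem hz f)⟩

lemma ofMemHv_apply {f : ℂ → ℂ} (hf : MemHv G v f) {z : ℂ} (hz : z ∈ G) :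
    ofMemHv hv hf z = f z :=
  indicator_of_mem hz f

lemma norm_ofMemHv {f : ℂ → ℂ} (hf : MemHv G v f) : ‖ofMemHv hv hf‖ = HvNorm G v f :=
  hvNorm_congr fun _ hz => ofMemHv_apply hf hz

lemma normedSpaceCore (hN : HvNormed G v) : NormedSpace.Core ℂ (HvSpace G v hv) where
  norm_nonneg F := hvNorm_nonneg hv F
  norm_smul c F := hvNorm_smul c F
  norm_triangle F F' := hvNorm_add_le hv F.memHv F'.memHv
  norm_eq_zero_iff F := by
    refine ⟨fun h => DFunLike.ext _ _ fun z => ?_, fun h => ?_⟩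
    · by_cases hz : z ∈ G
      · refine hN F F.memHv (fun w hw => le_antisymm ?_ ?_) z hz
        · exact h ▸ le_hvNorm F.memHv hw
        · exact mul_nonneg (hv w hw) (norm_nonneg _)
      · exact F.eq_zero_of_notMem hz
    · subst h
      exact le_antisymm (hvNorm_le le_rfl fun z _ => by simp) (hvNorm_nonneg hv _)

instance [Fact (HvNormed G v)] : NormedAddCommGroup (HvSpace G v hv) :=
  .ofCore (normedSpaceCore Fact.out)

instance [Fact (HvNormed G v)] : NormedSpace ℂ (HvSpace G v hv) :=
  .ofCore (normedSpaceCore Fact.out)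

variable (hv) in
def restrictBCF {U K : Set ℂ} (hK : IsCompact K) (hUK : U ⊆ K) (hKG : K ⊆ G) :
    HvSpace G v hv →ₗ[ℂ] U →ᵇ ℂ where
  toFun F := ⟨⟨U.domRestrict F, (F.memHv.1.continuousOn.mono (hUK.trans hKG)).domRestrict⟩,
    isBounded_range_iff.1 <|
      (hK.image_of_continuousOn (F.memHv.1.continuousOn.mono hKG)).isBounded.subset <|
        range_subset_iff.2 fun y => mem_image_of_mem F (hUK y.2)⟩
  map_add' _ _ := rfl
  map_smul' _ _ := rfl

@[simp] lemma restrictBCF_apply {U K : Set ℂ} (hK : IsCompact K) (hUK : U ⊆ K) (hKG : K ⊆ G)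
    (F : HvSpace G v hv) (y : U) : restrictBCF hv hK hUK hKG F y = F y :=
  rfl

variable [Fact (HvNormed G v)]

lemma hvCauchy_of_cauchySeq {F : ℕ → HvSpace G v hv} (hF : CauchySeq F) :
    HvCauchy G v fun n => F n := by
  intro ε hε
  obtain ⟨N, hN⟩ := Metric.cauchySeq_iff.1 hF ε hε
  refine ⟨N, fun m hm n hn z hz => (le_hvNorm (F m - F n).memHv hz).trans ?_⟩
  simpa only [dist_eq_norm, norm_def] using (hN m hm n hn).le

lemma tendsto_of_hvTendsto {F : ℕ → HvSpace G v hv} {F₀ : HvSpace G v hv} {f : ℂ → ℂ}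
    (hF₀ : ∀ z ∈ G, F₀ z = f z) (hF : HvTendsto G v (fun n => F n) f) :
    Tendsto F atTop (𝓝 F₀) := by
  refine Metric.tendsto_atTop.2 fun ε hε => ?_
  obtain ⟨N, hN⟩ := hF (ε / 2) (half_pos hε)
  refine ⟨N, fun n hn => ?_⟩
  rw [dist_eq_norm]
  refine (hvNorm_le (half_pos hε).le fun z hz => ?_).trans_lt (half_lt_self hε)
  simpa only [coe_sub, Pi.sub_apply, hF₀ z hz] using hN n hn z hz

lemma completeSpace (hC : HvComplete G v) : CompleteSpace (HvSpace G v hv) := by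
  refine Metric.complete_of_cauchySeq_tendsto fun F hF => ?_
  obtain ⟨f, hf, hlim⟩ := hC (fun n => F n) (fun n => (F n).memHv) (hvCauchy_of_cauchySeq hF)
  exact ⟨ofMemHv hv hf, tendsto_of_hvTendsto (fun _ => ofMemHv_apply hf) hlim⟩

lemma tendsto_apply {F : ℕ → HvSpace G v hv} {F₀ : HvSpace G v hv} {y : ℂ}
    (hy : HvEvalBoundedOn G v {y}) (hF : Tendsto F atTop (𝓝 F₀)) :
    Tendsto (fun n => F n y) atTop (𝓝 (F₀ y)) := by
  obtain ⟨C, hC⟩ := hy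
  rw [tendsto_iff_norm_sub_tendsto_zero] at hF ⊢
  refine squeeze_zero (fun _ => norm_nonneg _) (fun n => hC y rfl _ (F n - F₀).memHv) ?_
  simpa [norm_def] using hF.const_mul C

end HvSpace

theorem hvEvalBoundedOn_of_frequently (hv : ∀ z ∈ G, 0 ≤ v z) (hN : HvNormed G v)
    (hC : HvComplete G v) {U K A : Set ℂ} (hU : IsOpen U) (hUc : IsPreconnected U)
    (hK : IsCompact K) (hUK : U ⊆ K) (hKG : K ⊆ G) (hA : ∀ y ∈ A, HvEvalBoundedOn G v {y})
    {a : ℂ} (ha : a ∈ U) (hfreq : ∃ᶠ y in 𝓝[≠] a, y ∈ A) : HvEvalBoundedOn G v U := by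
  classical
  have : Fact (HvNormed G v) := ⟨hN⟩
  have := HvSpace.completeSpace (hv := hv) hC
  have hUG : U ⊆ G := hUK.trans hKG
  set T := HvSpace.restrictBCF hv hK hUK hKG
  have hT : Continuous T := T.continuous_of_seq_closed_graph fun u F g hu hg => by
    set ĝ : ℂ → ℂ := fun z => if h : z ∈ U then g ⟨z, h⟩ else 0
    have hunif : TendstoUniformlyOn (fun n => ⇑(u n)) ĝ atTop U := by
      rw [tendstoUniformlyOn_iff_tendstoUniformly_comp_coe]
      have hĝg : ĝ ∘ (↑) = ⇑g := funext fun ⟨y, hy⟩ => by simp [ĝ, hy]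
      exact hĝg ▸ BoundedContinuousFunction.tendsto_iff_tendstoUniformly.1 hg
    have hĝ : DifferentiableOn ℂ ĝ U :=
      hunif.tendstoLocallyUniformlyOn.differentiableOn
        (Eventually.of_forall fun n => (u n).memHv.1.mono hUG) hU
    have hfreq' : ∃ᶠ y in 𝓝[≠] a, ĝ y = F y :=
      (hfreq.and_eventually (eventually_nhdsWithin_of_eventually_nhds (hU.mem_nhds ha))).mono
        fun y ⟨hyA, hyU⟩ => tendsto_nhds_unique (hunif.tendsto_at hyU)
          (HvSpace.tendsto_apply (hA y hyA) hu)
    have heq : EqOn ĝ F U := (hĝ.analyticOnNhd hU).eqOn_of_preconnected_of_frequently_eq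
      ((F.memHv.1.mono hUG).analyticOnNhd hU) hUc ha hfreq'
    ext ⟨y, hy⟩
    simpa [ĝ, hy, T] using heq hy
  refine ⟨‖(⟨T, hT⟩ : HvSpace G v hv →L[ℂ] U →ᵇ ℂ)‖, fun y hy f hf => ?_⟩
  calc ‖f y‖ = ‖T (HvSpace.ofMemHv hv hf) ⟨y, hy⟩‖ := by
        rw [HvSpace.restrictBCF_apply, HvSpace.ofMemHv_apply hf (hUG hy)]
    _ ≤ _ := BoundedContinuousFunction.norm_coe_le_norm _ _
    _ ≤ _ := ContinuousLinearMap.le_opNorm ⟨T, hT⟩ _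
    _ = _ := by rw [HvSpace.norm_ofMemHv]

theorem hvEvalBoundedOn_nhds_of_hvComplete (hG : IsOpen G) (hGc : IsPreconnected G)
    (hv : ∀ z ∈ G, 0 ≤ v z) {z₀ : ℂ} (hz₀ : z₀ ∈ G)
    (hacc : ∃ᶠ y in 𝓝[≠] z₀, y ∈ {w ∈ G | 0 < v w}) (hC : HvComplete G v) :
    ∀ z ∈ G, ∃ U ∈ 𝓝 z, HvEvalBoundedOn G v U := by
  have hball : ∀ {w r A}, 0 < r → closedBall w r ⊆ G → (∀ y ∈ A, HvEvalBoundedOn G v {y}) →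
      (∃ᶠ y in 𝓝[≠] w, y ∈ A) → HvEvalBoundedOn G v (ball w r) := fun hr hwr hA hfreq =>
    hvEvalBoundedOn_of_frequently hv (hvNormed_of_frequently hG hGc hz₀ hacc) hC isOpen_ball
      (convex_ball _ _).isPreconnected (isCompact_closedBall _ _) ball_subset_closedBall hwr hA
      (mem_ball_self hr) hfreq
  set S := {z | ∃ U ∈ 𝓝 z, HvEvalBoundedOn G v U}
  have hS : IsOpen S := isOpen_iff_mem_nhds.2 fun z ⟨U, hU, hUb⟩ =>
    (eventually_eventually_nhds.2 hU).mono fun y hy => ⟨U, hy, hUb⟩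
  have hz₀S : z₀ ∈ S := by
    obtain ⟨r, hr, hrG⟩ := nhds_basis_closedBall.mem_iff.1 (hG.mem_nhds hz₀)
    exact ⟨_, ball_mem_nhds z₀ hr, hball hr hrG
      (fun y hy => hvEvalBoundedOn_singleton_of_pos hy.1 hy.2) hacc⟩
  refine fun z hz => hGc.subset_of_closure_inter_subset hS ⟨z₀, hz₀, hz₀S⟩ ?_ hz
  rintro z ⟨hzS, hzG⟩
  obtain ⟨r, hr, hrG⟩ := nhds_basis_closedBall.mem_iff.1 (hG.mem_nhds hzG)
  obtain ⟨w, hwz, U, hU, hUb⟩ := mem_closure_iff.1 hzS _ isOpen_ball (mem_ball_self (half_pos hr))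
  rw [mem_ball] at hwz
  refine ⟨ball w (r / 2), isOpen_ball.mem_nhds (by rw [mem_ball, dist_comm]; exact hwz),
    hball (half_pos hr) ((closedBall_subset_closedBall' (by linarith)).trans hrG)
      (fun y hy => hUb.mono (singleton_subset_iff.2 hy))
      (eventually_nhdsWithin_of_eventually_nhds hU).frequently⟩

theorem hvEvalBoundedOn_of_hvComplete (hG : IsOpen G) (hGc : IsConnected G)
    (hv : ∀ z ∈ G, 0 ≤ v z) (hacc : ∃ z ∈ G, AccPt z (𝓟 {w ∈ G | 0 < v w}))
    (hC : HvComplete G v) {K : Set ℂ} (hK : IsCompact K) (hKG : K ⊆ G) :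
    HvEvalBoundedOn G v K := by
  obtain ⟨z₀, hz₀, hacc⟩ := hacc
  have hnhds := hvEvalBoundedOn_nhds_of_hvComplete hG hGc.isPreconnected hv hz₀
    (accPt_iff_frequently_nhdsNE.1 hacc) hC
  exact hK.hvEvalBoundedOn hv fun z hz => hnhds z (hKG hz)

section Completeness

variable {F : ℕ → ℂ → ℂ} {f : ℂ → ℂ}

lemma HvCauchy.uniformCauchySeqOn (hv : ∀ z ∈ G, 0 ≤ v z) (hF : ∀ n, MemHv G v (F n))
    (hc : HvCauchy G v F) {K : Set ℂ} (hK : HvEvalBoundedOn G v K) :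
    UniformCauchySeqOn F atTop K := by
  obtain ⟨C, hC⟩ := hK
  refine Metric.uniformCauchySeqOn_iff.2 fun ε hε => ?_
  have hδ : 0 < ε / (|C| + 1) := by positivity
  obtain ⟨N, hN⟩ := hc _ hδ
  refine ⟨N, fun m hm n hn z hz => ?_⟩
  calc dist (F m z) (F n z) = ‖(F m - F n) z‖ := dist_eq_norm _ _
    _ ≤ C * HvNorm G v (F m - F n) := hC z hz _ ((hF m).sub hv (hF n))
    _ ≤ |C| * (ε / (|C| + 1)) := mul_le_mul (le_abs_self C) (hvNorm_le hδ.le (hN m hm n hn))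
        (hvNorm_nonneg hv _) (abs_nonneg C)
    _ < ε := by
        rw [← mul_div_assoc, div_lt_iff₀ (by positivity)]
        nlinarith [abs_nonneg C]

lemma HvCauchy.hvTendsto_of_tendsto (hc : HvCauchy G v F)
    (hlim : ∀ z ∈ G, Tendsto (F · z) atTop (𝓝 (f z))) : HvTendsto G v F f := by
  intro ε hε
  obtain ⟨N, hN⟩ := hc ε hε
  refine ⟨N, fun n hn z hz =>
    le_of_tendsto ((tendsto_const_nhds.sub (hlim z hz)).norm.const_mul (v z)) ?_⟩
  filter_upwards [eventually_ge_atTop N] with m hm using hN n hn m hm z hz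

lemma HvTendsto.memHv (hv : ∀ z ∈ G, 0 ≤ v z) (hF : ∀ n, MemHv G v (F n))
    (hlim : HvTendsto G v F f) (hf : DifferentiableOn ℂ f G) : MemHv G v f := by
  obtain ⟨N, hN⟩ := hlim 1 one_pos
  refine ⟨hf, HvNorm G v (F N) + 1, fun z hz => ?_⟩
  calc v z * ‖f z‖ ≤ v z * (‖F N z‖ + ‖F N z - f z‖) :=
        mul_le_mul_of_nonneg_left (norm_le_insert _ _) (hv z hz)
    _ ≤ HvNorm G v (F N) + 1 := by
        rw [mul_add]; exact add_le_add (le_hvNorm (hF N) hz) (hN N le_rfl z hz)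

end Completeness

theorem hvComplete_of_hvEvalBoundedOn (hG : IsOpen G) (hv : ∀ z ∈ G, 0 ≤ v z)
    (h : ∀ K ⊆ G, IsCompact K → HvEvalBoundedOn G v K) : HvComplete G v := by
  intro F hF hc
  have hunif : ∀ K ⊆ G, IsCompact K → UniformCauchySeqOn F atTop K := fun K hKG hK =>
    hc.uniformCauchySeqOn hv hF (h K hKG hK)
  have hlim : ∀ z ∈ G, Tendsto (F · z) atTop (𝓝 (limUnder atTop (F · z))) := fun z hz =>
    ((hunif {z} (singleton_subset_iff.2 hz) isCompact_singleton).cauchySeq rfl).tendsto_limUnder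
  have hloc : TendstoLocallyUniformlyOn F (fun z => limUnder atTop (F · z)) atTop G :=
    (tendstoLocallyUniformlyOn_iff_forall_isCompact hG).2 fun K hKG hK =>
      (hunif K hKG hK).tendstoUniformlyOn_of_tendsto fun z hz => hlim z (hKG hz)
  have hFf := hc.hvTendsto_of_tendsto hlim
  exact ⟨_, hFf.memHv hv hF (hloc.differentiableOn (Eventually.of_forall fun n => (hF n).1) hG),
    hFf⟩

theorem stmt3 (G : Set ℂ) (v : ℂ → ℝ) (hG : IsOpen G) (hGc : IsConnected G)
    (hv : ∀ z ∈ G, 0 ≤ v z)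
    (hacc : ∃ z ∈ G, AccPt z (𝓟 {w ∈ G | 0 < v w})) :
    HvComplete G v ↔
      ((∀ z ∈ G, ∃ C : ℝ, ∀ f : ℂ → ℂ, MemHv G v f →
          ‖f z‖ ≤ C * HvNorm G v f) ∧
       (∀ K ⊆ G, IsCompact K → ∃ C : ℝ, ∀ z ∈ K, ∀ f : ℂ → ℂ, MemHv G v f →
          ‖f z‖ ≤ C * HvNorm G v f)) := by
  have hbdd : HvComplete G v → ∀ K ⊆ G, IsCompact K → HvEvalBoundedOn G v K :=
    fun hC _ hKG hK => hvEvalBoundedOn_of_hvComplete hG hGc hv hacc hC hK hKG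
  refine ⟨fun hC => ⟨fun z hz => ?_, hbdd hC⟩, fun h => hvComplete_of_hvEvalBoundedOn hG hv h.2⟩
  obtain ⟨C, hC⟩ := hbdd hC {z} (singleton_subset_iff.2 hz) isCompact_singleton
  exact ⟨C, hC z rfl⟩
end
end

section
/- Suppose E_v is not discrete, so H^∞_v(G) is normed. Then H^∞_v(G) is complete if and only if every function f : E_v → ℂ which is a uniform limit on E_v (with respect to the weight v, i.e., sup_{z∈E_v} v(z)|f_n(z) − f(z)| → 0 for some sequence (f_n) in H^∞_v(G)) extends to a holomorphic function on G. -/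
open Complex Metric Set Filter Topology MeasureTheory

noncomputable section

/-!
A `‖·‖_v`-Cauchy sequence converges pointwise on `E_v = {v > 0}`, and the weighted Cauchy
bound passes to this pointwise limit, so it is a `‖·‖_v`-limit on `E_v`. Values off `E_v`
are invisible to `‖·‖_v`, so a sequence converges in `H^∞_v(G)` exactly when its limit on
`E_v` agrees there with a holomorphic function on `G`; the limit of `v`-bounded functions
is again `v`-bounded.
-/

section WeightedConvergence

variable {S G : Set ℂ} {v : ℂ → ℝ} {F : ℕ → ℂ → ℂ} {f g : ℂ → ℂ}

lemma forall_weighted_le_of_forall_pos {h : ℂ → ℂ} {C : ℝ} (hC : 0 ≤ C)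
    (hE : ∀ z ∈ {w ∈ G | 0 < v w}, v z * ‖h z‖ ≤ C) :
    ∀ z ∈ G, v z * ‖h z‖ ≤ C := by
  intro z hz
  rcases lt_or_ge 0 (v z) with hvz | hvz
  · exact hE z ⟨hz, hvz⟩
  · exact (mul_nonpos_of_nonpos_of_nonneg hvz (norm_nonneg _)).trans hC

lemma hvTendsto_iff_pos : HvTendsto G v F f ↔ HvTendsto {w ∈ G | 0 < v w} v F f := by
  refine ⟨fun h ε hε => ?_, fun h ε hε => ?_⟩
  · obtain ⟨N, hN⟩ := h ε hε
    exact ⟨N, fun n hn z hz => hN n hn z hz.1⟩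
  · obtain ⟨N, hN⟩ := h ε hε
    exact ⟨N, fun n hn => forall_weighted_le_of_forall_pos hε.le (hN n hn)⟩

lemma hvCauchy_iff_pos : HvCauchy G v F ↔ HvCauchy {w ∈ G | 0 < v w} v F := by
  refine ⟨fun h ε hε => ?_, fun h ε hε => ?_⟩
  · obtain ⟨N, hN⟩ := h ε hε
    exact ⟨N, fun m hm n hn z hz => hN m hm n hn z hz.1⟩
  · obtain ⟨N, hN⟩ := h ε hε
    exact ⟨N, fun m hm n hn => forall_weighted_le_of_forall_pos hε.le (hN m hm n hn)⟩

lemma HvTendsto.congr (h : HvTendsto S v F f) (hfg : EqOn f g S) : HvTendsto S v F g := by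
  intro ε hε
  obtain ⟨N, hN⟩ := h ε hε
  exact ⟨N, fun n hn z hz => hfg hz ▸ hN n hn z hz⟩

lemma HvTendsto.hvCauchy (h : HvTendsto S v F f) (hv : ∀ z ∈ S, 0 ≤ v z) :
    HvCauchy S v F := by
  intro ε hε
  obtain ⟨N, hN⟩ := h (ε / 2) (half_pos hε)
  refine ⟨N, fun m hm n hn z hz => ?_⟩
  calc v z * ‖F m z - F n z‖
      ≤ v z * (‖F m z - f z‖ + ‖F n z - f z‖) :=
        mul_le_mul_of_nonneg_left
          (by simpa only [dist_eq_norm] using dist_triangle_right (F m z) (F n z) (f z)) (hv z hz)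
    _ = v z * ‖F m z - f z‖ + v z * ‖F n z - f z‖ := mul_add _ _ _
    _ ≤ ε := by linarith [hN m hm z hz, hN n hn z hz]

lemma HvTendsto.tendsto_apply (h : HvTendsto S v F f) {z : ℂ} (hz : z ∈ S) (hvz : 0 < v z) :
    Tendsto (F · z) atTop (𝓝 (f z)) := by
  rw [tendsto_iff_norm_sub_tendsto_zero]
  refine squeeze_zero (fun _ => norm_nonneg _) (g := fun n => (v z)⁻¹ * (v z * ‖F n z - f z‖))
    (fun n => (inv_mul_cancel_left₀ hvz.ne' _).ge) ?_
  rw [← mul_zero (v z)⁻¹]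
  refine tendsto_const_nhds.mul (Metric.tendsto_atTop.2 fun ε hε => ?_)
  obtain ⟨N, hN⟩ := h (ε / 2) (half_pos hε)
  refine ⟨N, fun n hn => ?_⟩
  rw [Real.dist_0_eq_abs, abs_of_nonneg (by positivity)]
  linarith [hN n hn z hz]

lemma HvTendsto.eq_of_pos (hf : HvTendsto S v F f) (hg : HvTendsto S v F g) {z : ℂ}
    (hz : z ∈ S) (hvz : 0 < v z) : f z = g z :=
  tendsto_nhds_unique (hf.tendsto_apply hz hvz) (hg.tendsto_apply hz hvz)

lemma HvCauchy.cauchySeq_apply (h : HvCauchy S v F) {z : ℂ} (hz : z ∈ S) (hvz : 0 < v z) :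
    CauchySeq (F · z) := by
  refine Metric.cauchySeq_iff.2 fun ε hε => ?_
  obtain ⟨N, hN⟩ := h (v z * (ε / 2)) (by positivity)
  refine ⟨N, fun m hm n hn => ?_⟩
  rw [dist_eq_norm]
  have := le_of_mul_le_mul_left (hN m hm n hn z hz) hvz
  linarith

lemma HvCauchy.hvTendsto_limUnder (h : HvCauchy S v F) :
    HvTendsto {z ∈ S | 0 < v z} v F (fun z => limUnder atTop (F · z)) := by
  intro ε hε
  obtain ⟨N, hN⟩ := h ε hε
  refine ⟨N, fun n hn z hz => ?_⟩
  have hlim := (h.cauchySeq_apply hz.1 hz.2).tendsto_limUnder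
  exact le_of_tendsto (tendsto_const_nhds.mul ((hlim.const_sub (F n z)).norm))
    (eventually_atTop.2 ⟨N, fun m hm => hN n hn m hm z hz.1⟩)

lemma HvTendsto.exists_bound (h : HvTendsto S v F f) (hv : ∀ z ∈ S, 0 ≤ v z)
    (hF : ∀ n, ∃ C, ∀ z ∈ S, v z * ‖F n z‖ ≤ C) : ∃ C, ∀ z ∈ S, v z * ‖f z‖ ≤ C := by
  obtain ⟨N, hN⟩ := h 1 one_pos
  obtain ⟨C, hC⟩ := hF N
  refine ⟨C + 1, fun z hz => ?_⟩
  calc v z * ‖f z‖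
      ≤ v z * (‖F N z‖ + ‖F N z - f z‖) :=
        mul_le_mul_of_nonneg_left (norm_le_norm_add_norm_sub _ _) (hv z hz)
    _ = v z * ‖F N z‖ + v z * ‖F N z - f z‖ := mul_add _ _ _
    _ ≤ C + 1 := add_le_add (hC z hz) (hN N le_rfl z hz)

end WeightedConvergence

theorem stmt9_general (G : Set ℂ) (v : ℂ → ℝ) :
    HvComplete G v ↔
      ∀ f : ℂ → ℂ,
        (∃ F : ℕ → ℂ → ℂ, (∀ n, MemHv G v (F n)) ∧
          ∀ ε : ℝ, 0 < ε → ∃ N : ℕ, ∀ n ≥ N, ∀ z ∈ {w ∈ G | 0 < v w},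
            v z * ‖F n z - f z‖ ≤ ε) →
        ∃ g : ℂ → ℂ, DifferentiableOn ℂ g G ∧
          ∀ z ∈ {w ∈ G | 0 < v w}, g z = f z := by
  have hvE : ∀ z ∈ {w ∈ G | 0 < v w}, 0 ≤ v z := fun z hz => hz.2.le
  constructor
  · rintro hcomp f ⟨F, hF, hFf⟩
    obtain ⟨g, hg, hFg⟩ := hcomp F hF (hvCauchy_iff_pos.2 (HvTendsto.hvCauchy hFf hvE))
    exact ⟨g, hg.1, fun z hz => (hvTendsto_iff_pos.1 hFg).eq_of_pos hFf hz hz.2⟩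
  · intro hext F hF hcau
    have hFf : HvTendsto {w ∈ G | 0 < v w} v F _ := hcau.hvTendsto_limUnder
    obtain ⟨g, hg, hgf⟩ := hext _ ⟨F, hF, hFf⟩
    have hFg : HvTendsto {w ∈ G | 0 < v w} v F g := hFf.congr fun z hz => (hgf z hz).symm
    obtain ⟨C, hC⟩ := hFg.exists_bound hvE fun n => (hF n).2.imp fun C hC z hz => hC z hz.1
    refine ⟨g, ⟨hg, max C 0, forall_weighted_le_of_forall_pos (le_max_right C 0)
      fun z hz => (hC z hz).trans (le_max_left C 0)⟩, hvTendsto_iff_pos.2 hFg⟩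

theorem stmt9 (G : Set ℂ) (v : ℂ → ℝ) (hG : IsOpen G) (hGc : IsConnected G)
    (hv : ∀ z ∈ G, 0 ≤ v z)
    (hacc : ∃ z ∈ G, AccPt z (𝓟 {w ∈ G | 0 < v w})) :
    HvComplete G v ↔
      ∀ f : ℂ → ℂ,
        (∃ F : ℕ → ℂ → ℂ, (∀ n, MemHv G v (F n)) ∧
          ∀ ε : ℝ, 0 < ε → ∃ N : ℕ, ∀ n ≥ N, ∀ z ∈ {w ∈ G | 0 < v w},
            v z * ‖F n z - f z‖ ≤ ε) →
        ∃ g : ℂ → ℂ, DifferentiableOn ℂ g G ∧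
          ∀ z ∈ {w ∈ G | 0 < v w}, g z = f z :=
  stmt9_general G v
end
end

section
/- Let v be a bounded radial weight on the unit disk 𝔻 (v(z) depends only on |z|). Then H^∞_v(𝔻) is a Banach space if and only if there is a strictly increasing sequence (r_k) in (0,1) with r_k → 1 and v(r_k) > 0 for all k. -/
open Complex Metric Set Filter Topology MeasureTheory

noncomputable section

/-- Maximum modulus: bound on the circle of radius `r` gives a bound on the closed disk. -/
lemma maxmod {g : ℂ → ℂ} {r C : ℝ} (hr : 0 < r) (hr1 : r < 1)
    (hg : DifferentiableOn ℂ g (ball (0:ℂ) 1))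
    (hC : ∀ z ∈ sphere (0:ℂ) r, ‖g z‖ ≤ C) :
    ∀ z ∈ closedBall (0:ℂ) r, ‖g z‖ ≤ C := by
  intro z hz
  have hsub : closedBall (0:ℂ) r ⊆ ball (0:ℂ) 1 := closedBall_subset_ball hr1
  have hcl : closure (ball (0:ℂ) r) = closedBall (0:ℂ) r := closure_ball 0 hr.ne'
  have hd : DiffContOnCl ℂ g (ball (0:ℂ) r) :=
    DifferentiableOn.diffContOnCl (by rw [hcl]; exact hg.mono hsub)
  have := Complex.norm_le_of_forall_mem_frontier_norm_le (isBounded_ball) hd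
    (C := C) (by rw [frontier_ball 0 hr.ne']; exact hC) (z := z) (by rw [hcl]; exact hz)
  exact this

/-- Identity theorem: two holomorphic functions agreeing on a circle agree on the disk. -/
lemma eqOn_of_sphere {f g : ℂ → ℂ} {R r₀ : ℝ}
    (hf : DifferentiableOn ℂ f (ball (0:ℂ) R)) (hg : DifferentiableOn ℂ g (ball (0:ℂ) R))
    (hr0 : 0 < r₀) (hrR : r₀ < R)
    (h : ∀ z ∈ sphere (0:ℂ) r₀, f z = g z) : EqOn f g (ball (0:ℂ) R) := by
  have hfa : AnalyticOnNhd ℂ f (ball (0:ℂ) R) := hf.analyticOnNhd isOpen_ball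
  have hga : AnalyticOnNhd ℂ g (ball (0:ℂ) R) := hg.analyticOnNhd isOpen_ball
  have hz0 : (r₀ : ℂ) ∈ ball (0:ℂ) R := by
    simp only [mem_ball, Complex.dist_eq, sub_zero, Complex.norm_real, Real.norm_eq_abs]
    rw [abs_of_pos hr0]; exact hrR
  refine hfa.eqOn_of_preconnected_of_frequently_eq hga (convex_ball _ _).isPreconnected hz0 ?_
  set u : ℕ → ℂ := fun n => (r₀ : ℂ) * Complex.exp (Complex.I * ((1 / (n+1) : ℝ) : ℂ)) with hu
  have habs : ∀ n, ‖u n‖ = r₀ := by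
    intro n
    simp only [hu, norm_mul, Complex.norm_real, Real.norm_eq_abs, Complex.norm_exp]
    rw [abs_of_pos hr0]
    have : (Complex.I * ((1 / (n+1) : ℝ) : ℂ)).re = 0 := by simp [Complex.mul_re]
    rw [this, Real.exp_zero, mul_one]
  have hne : ∀ n, u n ≠ (r₀ : ℂ) := by
    intro n heq
    have hr₀ne : ((r₀ : ℝ) : ℂ) ≠ 0 := by
      simpa using hr0.ne'
    have hexp : Complex.exp (Complex.I * ((1 / (n+1) : ℝ) : ℂ)) = 1 := by
      apply mul_left_cancel₀ hr₀ne
      rw [mul_one]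
      exact heq
    rw [Complex.exp_eq_one_iff] at hexp
    obtain ⟨k, hk⟩ := hexp
    have hIne : (Complex.I : ℂ) ≠ 0 := Complex.I_ne_zero
    have : ((1 / (n+1) : ℝ) : ℂ) = (k : ℂ) * (2 * Real.pi) := by
      have : Complex.I * ((1 / (n+1) : ℝ) : ℂ) = ((k : ℂ) * (2 * Real.pi)) * Complex.I := by
        rw [hk]; ring
      rw [mul_comm] at this
      exact mul_right_cancel₀ hIne this
    have hreal : (1 / (n+1) : ℝ) = (k : ℝ) * (2 * Real.pi) := by
      exact_mod_cast this
    have hpos : (0:ℝ) < 1 / (n+1) := by positivity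
    have hle : (1 / (n+1) : ℝ) ≤ 1 := by
      rw [div_le_one (by positivity)]; exact le_add_of_nonneg_left (Nat.cast_nonneg n)
    have hk1 : (1:ℝ) ≤ (k:ℝ) := by
      by_contra hcon
      push_neg at hcon
      have : (k:ℝ) ≤ 0 := by
        have : k < 1 := by exact_mod_cast hcon
        have : k ≤ 0 := by omega
        exact_mod_cast this
      nlinarith [Real.pi_pos]
    nlinarith [Real.pi_gt_three]
  have htu : Tendsto u atTop (𝓝[≠] (r₀ : ℂ)) := by
    rw [tendsto_nhdsWithin_iff]
    constructor
    · have h1 : Tendsto (fun n : ℕ => (1 / (n+1) : ℝ)) atTop (𝓝 0) :=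
        tendsto_one_div_add_atTop_nhds_zero_nat
      have h2 : Tendsto (fun n : ℕ => Complex.I * ((1 / (n+1) : ℝ) : ℂ)) atTop (𝓝 0) := by
        have := (Complex.continuous_ofReal.tendsto 0).comp h1
        simpa using this.const_mul Complex.I
      have h3 := (Complex.continuous_exp.tendsto 0).comp h2
      rw [Complex.exp_zero] at h3
      have h4 := h3.const_mul ((r₀ : ℝ) : ℂ)
      simpa [hu] using h4
    · exact Eventually.of_forall fun n => hne n
  refine htu.frequently (Frequently.of_forall fun n => ?_)
  apply h
  simp only [mem_sphere_iff_norm, sub_zero]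
  exact habs n

lemma geom_closed {w : ℂ} (hw1 : w ≠ 1) (n : ℕ) :
    (∑ j ∈ Finset.range n, w^j) - (1 - w)⁻¹ = w^n / (w - 1) := by
  have hwne : w - 1 ≠ 0 := sub_ne_zero.mpr hw1
  have h2 : (1 - w)⁻¹ = -((w-1)⁻¹) := by rw [← neg_sub w 1, inv_neg]
  rw [geom_sum_eq hw1, h2, sub_neg_eq_add, inv_eq_one_div, ← add_div, sub_add_cancel]

/-- Geometric tail bound. -/
lemma geom_tail {ρ σ : ℝ} (hρ : 0 ≤ ρ) (hρσ : ρ < σ) (hσ : 0 < σ) {z : ℂ}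
    (hz : ‖z‖ ≤ ρ) (n : ℕ) :
    ‖(∑ j ∈ Finset.range n, (z/(σ:ℂ))^j) - (1 - z/(σ:ℂ))⁻¹‖ ≤ (ρ/σ)^n / (1 - ρ/σ) := by
  set w : ℂ := z / (σ:ℂ) with hw
  have hq1 : ρ/σ < 1 := (div_lt_one hσ).mpr hρσ
  have hwabs : ‖w‖ ≤ ρ/σ := by
    rw [hw, norm_div, Complex.norm_real, Real.norm_eq_abs, abs_of_pos hσ]
    gcongr
  have hw1 : w ≠ 1 := by
    intro h
    rw [h] at hwabs
    simp at hwabs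
    linarith
  have hwne : w - 1 ≠ 0 := sub_ne_zero.mpr hw1
  rw [geom_closed hw1, norm_div, norm_pow]
  have hden : (1:ℝ) - ρ/σ ≤ ‖w - 1‖ := by
    have h1 : (1:ℝ) - ‖w‖ ≤ ‖w - 1‖ := by
      have := norm_sub_norm_le (1:ℂ) w
      rw [norm_sub_rev] at this
      simpa using this
    linarith
  apply div_le_div₀ (by positivity)
  · exact pow_le_pow_left₀ (norm_nonneg _) hwabs n
  · linarith
  · exact hden

private lemma stmt16_fwd (v : ℂ → ℝ) (hv : ∀ z ∈ Metric.ball (0:ℂ) 1, 0 ≤ v z)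
    (hbdd : ∃ M : ℝ, ∀ z ∈ Metric.ball (0:ℂ) 1, v z ≤ M)
    (hrad : ∀ z ∈ Metric.ball (0:ℂ) 1, v z = v (‖z‖))
    (hB : IsBanachHv (Metric.ball (0:ℂ) 1) v) :
    ∃ r : ℕ → ℝ, StrictMono r ∧ (∀ k, 0 < r k) ∧ (∀ k, r k < 1) ∧
      Tendsto r atTop (𝓝 1) ∧ ∀ k, 0 < v (r k) := by
  obtain ⟨hN, hC⟩ := hB
  have hmem : ∀ s : ℝ, 0 < s → s < 1 → ((s:ℂ) ∈ ball (0:ℂ) 1) := by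
    intro s h0 h1
    rw [mem_ball_zero_iff, Complex.norm_real, Real.norm_eq_abs, abs_of_pos h0]
    exact h1
  by_contra hcon
  -- Step 1: v vanishes on an annulus near the boundary
  have key : ∃ ρ : ℝ, 0 < ρ ∧ ρ < 1 ∧ ∀ s : ℝ, ρ < s → s < 1 → v (s:ℂ) = 0 := by
    by_contra hk
    push_neg at hk
    have hk' : ∀ ρ : ℝ, ∃ s : ℝ, 0 < ρ → ρ < 1 → ρ < s ∧ s < 1 ∧ 0 < v (s:ℂ) := by
      intro ρ
      by_cases h : 0 < ρ ∧ ρ < 1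
      · obtain ⟨s, h1, h2, h3⟩ := hk ρ h.1 h.2
        refine ⟨s, fun _ _ => ⟨h1, h2, ?_⟩⟩
        have hs0 : 0 < s := lt_trans h.1 h1
        exact lt_of_le_of_ne (hv _ (hmem s hs0 h2)) (Ne.symm h3)
      · exact ⟨0, fun h1 h2 => absurd ⟨h1, h2⟩ h⟩
    choose g hg using hk'
    set r : ℕ → ℝ := fun k => Nat.rec (g (1/2)) (fun k rk => g (max rk (1 - 1/(k+2)))) k with hrdef
    have hr0 : r 0 = g (1/2) := rfl
    have hrsucc : ∀ k, r (k+1) = g (max (r k) (1 - 1/(k+2))) := fun k => rfl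
    have hinv : ∀ k, 0 < r k ∧ r k < 1 ∧ 1 - 1/(k+1) < r k ∧ 0 < v ((r k : ℝ) : ℂ) := by
      intro k
      induction k with
      | zero =>
        obtain ⟨h1, h2, h3⟩ := hg (1/2) (by norm_num) (by norm_num)
        rw [hr0] at *
        refine ⟨by linarith, h2, ?_, h3⟩
        norm_num
        linarith
      | succ k ih =>
        obtain ⟨ih1, ih2, _, _⟩ := ih
        have hfrac : (0:ℝ) < 1/((k:ℝ)+2) := by positivity
        have hmax0 : 0 < max (r k) (1 - 1/((k:ℝ)+2)) := lt_max_of_lt_left ih1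
        have hmax1 : max (r k) (1 - 1/((k:ℝ)+2)) < 1 := max_lt ih2 (by linarith)
        obtain ⟨h1, h2, h3⟩ := hg _ hmax0 hmax1
        rw [← hrsucc k] at h1 h2 h3
        have hle : (1:ℝ) - 1/((k:ℝ)+2) ≤ max (r k) (1 - 1/((k:ℝ)+2)) := le_max_right _ _
        have hgt : 1 - 1/((k:ℝ)+2) < r (k+1) := lt_of_le_of_lt hle h1
        have hrk : r k < r (k+1) := lt_of_le_of_lt (le_max_left _ _) h1
        refine ⟨lt_trans ih1 hrk, h2, ?_, h3⟩
        have hcast : ((k+1 : ℕ) : ℝ) + 1 = (k:ℝ) + 2 := by push_cast; ring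
        rw [hcast]
        exact hgt
    have hmono : StrictMono r := by
      apply strictMono_nat_of_lt_succ
      intro k
      have hfrac : (0:ℝ) < 1/((k:ℝ)+2) := by positivity
      have := (hg (max (r k) (1 - 1/((k:ℝ)+2))) (lt_max_of_lt_left (hinv k).1)
        (max_lt (hinv k).2.1 (by linarith))).1
      rw [← hrsucc k] at this
      exact lt_of_le_of_lt (le_max_left _ _) this
    have htend : Tendsto r atTop (𝓝 1) := by
      have hlow : Tendsto (fun k : ℕ => 1 - 1/((k:ℝ)+1)) atTop (𝓝 1) := by
        have h1 : Tendsto (fun n : ℕ => 1 / ((n : ℝ) + 1)) atTop (𝓝 0) :=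
          tendsto_one_div_add_atTop_nhds_zero_nat
        have h2 := (tendsto_const_nhds (x := (1:ℝ)) (f := atTop (α := ℕ))).sub h1
        simpa using h2
      exact tendsto_of_tendsto_of_tendsto_of_le_of_le hlow tendsto_const_nhds
        (fun k => ((hinv k).2.2.1).le) (fun k => ((hinv k).2.1).le)
    exact hcon ⟨r, hmono, fun k => (hinv k).1, fun k => (hinv k).2.1, htend,
      fun k => (hinv k).2.2.2⟩
  obtain ⟨ρ, hρ0, hρ1, hzero⟩ := key
  obtain ⟨M, hM⟩ := hbdd
  have hM0 : 0 ≤ M := le_trans (hv 0 (by simp)) (hM 0 (by simp))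
  by_cases hpos : ∃ r₀ : ℝ, 0 < r₀ ∧ r₀ < 1 ∧ 0 < v ((r₀:ℝ):ℂ)
  · -- completeness fails
    obtain ⟨r₀, hr₀0, hr₀1, hvr₀⟩ := hpos
    have hr₀ρ : r₀ ≤ ρ := by
      by_contra h
      push_neg at h
      exact absurd (hzero r₀ h hr₀1) (ne_of_gt hvr₀)
    set σ : ℝ := (ρ+1)/2 with hσdef
    have hρσ : ρ < σ := by rw [hσdef]; linarith
    have hσ1 : σ < 1 := by rw [hσdef]; linarith
    have hσ0 : 0 < σ := by rw [hσdef]; linarith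
    set q : ℝ := ρ/σ with hqdef
    have hq0 : 0 ≤ q := by positivity
    have hq1 : q < 1 := (div_lt_one hσ0).mpr hρσ
    have hq1' : 0 < 1 - q := by linarith
    set Fs : ℕ → ℂ → ℂ := fun n z => ∑ j ∈ Finset.range n, (z/(σ:ℂ))^j with hFsdef
    set gl : ℂ → ℂ := fun z => (1 - z/(σ:ℂ))⁻¹ with hgldef
    have hvz0 : ∀ z ∈ ball (0:ℂ) 1, ρ < ‖z‖ → v z = 0 := by
      intro z hz hlt
      rw [hrad z hz]
      exact hzero _ hlt (mem_ball_zero_iff.1 hz)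
    have hmemF : ∀ n, MemHv (ball (0:ℂ) 1) v (Fs n) := by
      intro n
      constructor
      · apply DifferentiableOn.fun_sum
        intro j _
        exact ((differentiableOn_id.div_const _).pow j)
      · refine ⟨M * ∑ j ∈ Finset.range n, (1/σ)^j, fun z hz => ?_⟩
        have habs : ‖Fs n z‖ ≤ ∑ j ∈ Finset.range n, (1/σ)^j := by
          refine le_trans (norm_sum_le _ _) ?_
          apply Finset.sum_le_sum
          intro j _
          rw [norm_pow, norm_div, Complex.norm_real, Real.norm_eq_abs, abs_of_pos hσ0]
          apply pow_le_pow_left₀ (by positivity)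
          gcongr
          exact (mem_ball_zero_iff.1 hz).le
        exact mul_le_mul (hM z hz) habs (norm_nonneg _) hM0
    have htail : ∀ z : ℂ, ‖z‖ ≤ ρ → ∀ n,
        ‖Fs n z - gl z‖ ≤ q^n / (1-q) :=
      fun z hz n => geom_tail hρ0.le hρσ hσ0 hz n
    have hqt : Tendsto (fun n : ℕ => M * (q^n/(1-q))) atTop (𝓝 0) := by
      have h1 := tendsto_pow_atTop_nhds_zero_of_lt_one hq0 hq1
      have h2 := (h1.div_const (1-q)).const_mul M
      simpa using h2
    have hqt2 : Tendsto (fun n : ℕ => q^n/(1-q)) atTop (𝓝 0) := by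
      have h1 := tendsto_pow_atTop_nhds_zero_of_lt_one hq0 hq1
      simpa using h1.div_const (1-q)
    have hqmono : ∀ N n, N ≤ n → q^n/(1-q) ≤ q^N/(1-q) := by
      intro N n hn
      apply div_le_div₀ (by positivity) (pow_le_pow_of_le_one hq0 hq1.le hn) hq1' le_rfl
    have hCauF : HvCauchy (ball (0:ℂ) 1) v Fs := by
      intro ε hε
      obtain ⟨N, hNq⟩ := eventually_atTop.1
        (hqt.eventually (eventually_le_nhds (show (0:ℝ) < ε/2 by linarith)))
      refine ⟨N, fun m hm n hn z hz => ?_⟩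
      by_cases hcase : ρ < ‖z‖
      · rw [hvz0 z hz hcase, zero_mul]; linarith
      · push_neg at hcase
        have h1 := htail z hcase m
        have h2 := htail z hcase n
        have h3 : ‖Fs m z - Fs n z‖ ≤ q^m/(1-q) + q^n/(1-q) := by
          calc ‖Fs m z - Fs n z‖
              = ‖(Fs m z - gl z) - (Fs n z - gl z)‖ := by ring_nf
            _ ≤ ‖Fs m z - gl z‖ + ‖Fs n z - gl z‖ :=
                norm_sub_le _ _
            _ ≤ q^m/(1-q) + q^n/(1-q) := add_le_add h1 h2
        have h4 : v z * ‖Fs m z - Fs n z‖ ≤ M * (q^m/(1-q) + q^n/(1-q)) :=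
          mul_le_mul (hM z hz) h3 (norm_nonneg _) hM0
        rw [mul_add] at h4
        have h5 := mul_le_mul_of_nonneg_left (hqmono N m hm) hM0
        have h6 := mul_le_mul_of_nonneg_left (hqmono N n hn) hM0
        have h7 := hNq N le_rfl
        linarith
    obtain ⟨f, hfmem, hft⟩ := hC Fs hmemF hCauF
    have hr₀σ : r₀ < σ := lt_of_le_of_lt hr₀ρ hρσ
    have hfgl : ∀ z ∈ sphere (0:ℂ) r₀, f z = gl z := by
      intro z hz
      have habsz : ‖z‖ = r₀ := by
        rw [mem_sphere_iff_norm, sub_zero] at hz; exact hz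
      have hzb : z ∈ ball (0:ℂ) 1 := by
        rw [mem_ball_zero_iff, habsz]; exact hr₀1
      have hvz : v z = v ((r₀:ℝ):ℂ) := by rw [hrad z hzb, habsz]
      have hkey : ∀ ε' : ℝ, 0 < ε' → ‖f z - gl z‖ ≤ ε' := by
        intro ε' hε'
        obtain ⟨N₁, hN₁⟩ := hft ((ε'/2) * v ((r₀:ℝ):ℂ)) (by positivity)
        obtain ⟨N₂, hN₂⟩ := eventually_atTop.1
          (hqt2.eventually (eventually_le_nhds (show (0:ℝ) < ε'/2 by linarith)))
        set n := max N₁ N₂ with hndef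
        have h1 := hN₁ n (le_max_left _ _) z hzb
        rw [hvz, mul_comm] at h1
        have h1' : ‖Fs n z - f z‖ ≤ ε'/2 := le_of_mul_le_mul_right h1 hvr₀
        have h2 := htail z (by rw [habsz]; exact hr₀ρ) n
        have h3 := hN₂ n (le_max_right _ _)
        have h4 : ‖f z - gl z‖ ≤
            ‖Fs n z - gl z‖ + ‖Fs n z - f z‖ := by
          calc ‖f z - gl z‖
              = ‖(Fs n z - gl z) - (Fs n z - f z)‖ := by ring_nf
            _ ≤ _ := norm_sub_le _ _
        linarith
      have h0 : ‖f z - gl z‖ ≤ 0 :=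
        le_of_forall_pos_le_add (by intro ε hε; simpa using hkey ε hε)
      have h0' : ‖f z - gl z‖ = 0 := le_antisymm h0 (norm_nonneg _)
      exact sub_eq_zero.mp (norm_eq_zero.mp h0')
    have hσne : ((σ:ℝ):ℂ) ≠ 0 := by
      simpa using hσ0.ne'
    have hglna : DifferentiableOn ℂ gl (ball (0:ℂ) σ) := by
      apply DifferentiableOn.inv
      · exact (differentiableOn_const 1).sub (differentiableOn_id.div_const _)
      · intro z hz h
        have hzσ : z = ((σ:ℝ):ℂ) := (div_eq_one_iff_eq hσne).mp (sub_eq_zero.mp h).symm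
        rw [hzσ, mem_ball_zero_iff, Complex.norm_real, Real.norm_eq_abs,
          abs_of_pos hσ0] at hz
        exact lt_irrefl _ hz
    have heq := eqOn_of_sphere (hfmem.1.mono (ball_subset_ball hσ1.le)) hglna hr₀0 hr₀σ hfgl
    have hσball : ((σ:ℝ):ℂ) ∈ ball (0:ℂ) 1 := hmem σ hσ0 hσ1
    have hcont := (hfmem.1.differentiableAt (isOpen_ball.mem_nhds hσball)).continuousAt
    rw [Metric.continuousAt_iff] at hcont
    obtain ⟨δ, hδ0, hδ⟩ := hcont 1 one_pos
    set B := ‖f ((σ:ℝ):ℂ)‖ with hBdef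
    have hB0 : 0 ≤ B := norm_nonneg _
    set η := min (δ/2) (σ/(2*(B+2))) with hηdef
    have hη0 : 0 < η := lt_min (by linarith) (by positivity)
    have hη2 : η ≤ σ/(2*(B+2)) := min_le_right _ _
    have hησ : η < σ := by
      have h2 : σ/(2*(B+2)) < σ := div_lt_self hσ0 (by linarith)
      linarith
    set s := σ - η with hsdef
    have hs0 : 0 < s := by rw [hsdef]; linarith
    have hsσ : s < σ := by rw [hsdef]; linarith
    have hsball : ((s:ℝ):ℂ) ∈ ball (0:ℂ) σ := by
      rw [mem_ball_zero_iff, Complex.norm_real, Real.norm_eq_abs, abs_of_pos hs0]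
      exact hsσ
    have hfs : f ((s:ℝ):ℂ) = gl ((s:ℝ):ℂ) := heq hsball
    have hdist : dist ((s:ℝ):ℂ) ((σ:ℝ):ℂ) < δ := by
      rw [Complex.dist_eq]
      have hcast : ((s:ℝ):ℂ) - ((σ:ℝ):ℂ) = ((s - σ : ℝ):ℂ) := by push_cast; ring
      rw [hcast, Complex.norm_real, Real.norm_eq_abs]
      have : s - σ = -η := by rw [hsdef]; ring
      rw [this, abs_neg, abs_of_pos hη0]
      have := min_le_left (δ/2) (σ/(2*(B+2)))
      rw [← hηdef] at this
      linarith
    have h5 := hδ hdist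
    rw [Complex.dist_eq] at h5
    have h6 : ‖f ((s:ℝ):ℂ)‖ < B + 1 := by
      have h7 : ‖f ((s:ℝ):ℂ)‖ ≤
          ‖f ((σ:ℝ):ℂ)‖ + ‖f ((s:ℝ):ℂ) - f ((σ:ℝ):ℂ)‖ := by
        calc ‖f ((s:ℝ):ℂ)‖
            = ‖f ((σ:ℝ):ℂ) - (f ((σ:ℝ):ℂ) - f ((s:ℝ):ℂ))‖ := by ring_nf
          _ ≤ ‖f ((σ:ℝ):ℂ)‖ + ‖f ((σ:ℝ):ℂ) - f ((s:ℝ):ℂ)‖ :=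
              norm_sub_le _ _
          _ = ‖f ((σ:ℝ):ℂ)‖ + ‖f ((s:ℝ):ℂ) - f ((σ:ℝ):ℂ)‖ := by
              rw [norm_sub_rev]
      rw [← hBdef] at h7
      linarith
    have hglval : ‖gl ((s:ℝ):ℂ)‖ = σ/η := by
      have h7 : (1:ℂ) - ((s:ℝ):ℂ)/((σ:ℝ):ℂ) = ((η/σ : ℝ):ℂ) := by
        rw [hsdef]
        push_cast
        field_simp
        ring
      rw [hgldef]
      simp only
      rw [h7, norm_inv, Complex.norm_real, Real.norm_eq_abs, abs_of_pos (by positivity), inv_div]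
    have h8 : 2*(B+2) ≤ σ/η := by
      rw [le_div_iff₀ hη0]
      calc 2*(B+2)*η ≤ 2*(B+2)*(σ/(2*(B+2))) := by gcongr
        _ = σ := by field_simp
    rw [hfs, hglval] at h6
    linarith
  · -- normedness fails via f = id
    push_neg at hpos
    have hall : ∀ s : ℝ, 0 < s → s < 1 → v ((s:ℝ):ℂ) = 0 := by
      intro s h0 h1
      exact le_antisymm (hpos s h0 h1) (hv _ (hmem s h0 h1))
    have hid : MemHv (ball (0:ℂ) 1) v id := by
      refine ⟨differentiableOn_id, M, fun z hz => ?_⟩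
      have h1 : ‖z‖ ≤ 1 := (mem_ball_zero_iff.1 hz).le
      calc v z * ‖id z‖ ≤ v z * 1 :=
            mul_le_mul_of_nonneg_left h1 (hv z hz)
        _ ≤ M := by rw [mul_one]; exact hM z hz
    have hzero' : ∀ z ∈ ball (0:ℂ) 1, v z * ‖id z‖ = 0 := by
      intro z hz
      by_cases h : z = 0
      · simp [h]
      · have habs : 0 < ‖z‖ := norm_pos_iff.mpr h
        have hvz : v z = 0 := by
          rw [hrad z hz]
          exact hall _ habs (mem_ball_zero_iff.1 hz)
        rw [hvz, zero_mul]
    have hhalf : (((1:ℝ)/2 : ℝ):ℂ) ∈ ball (0:ℂ) 1 := hmem (1/2) (by norm_num) (by norm_num)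
    have hfin := hN id hid hzero' _ hhalf
    simp only [id_eq, Complex.ofReal_eq_zero] at hfin
    norm_num at hfin

private lemma stmt16_rev (v : ℂ → ℝ) (hv : ∀ z ∈ Metric.ball (0:ℂ) 1, 0 ≤ v z)
    (hrad : ∀ z ∈ Metric.ball (0:ℂ) 1, v z = v (‖z‖))
    (r : ℕ → ℝ) (hmono : StrictMono r) (hr0 : ∀ k, 0 < r k) (hr1 : ∀ k, r k < 1)
    (hrt : Tendsto r atTop (𝓝 1)) (hvr : ∀ k, 0 < v (r k)) :
    IsBanachHv (Metric.ball (0:ℂ) 1) v := by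
  have hsphere_ball : ∀ k, ∀ z ∈ sphere (0:ℂ) (r k), z ∈ ball (0:ℂ) 1 := by
    intro k z hz
    rw [mem_sphere_iff_norm, sub_zero] at hz
    rw [mem_ball_zero_iff, hz]
    exact hr1 k
  have hvsphere : ∀ k, ∀ z ∈ sphere (0:ℂ) (r k), v z = v ((r k : ℝ) : ℂ) := by
    intro k z hz
    have h1 := hrad z (hsphere_ball k z hz)
    rw [mem_sphere_iff_norm, sub_zero] at hz
    rw [h1] at *
    rw [hz]
  constructor
  · -- Normed
    intro f hf h0 z hz
    have hsph : ∀ w ∈ sphere (0:ℂ) (r 0), f w = (fun _ => (0:ℂ)) w := by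
      intro w hw
      have h1 := h0 w (hsphere_ball 0 w hw)
      rw [hvsphere 0 w hw] at h1
      have := (hvr 0).ne'
      have habs : ‖f w‖ = 0 := by
        rcases mul_eq_zero.mp h1 with h | h
        · exact absurd h this
        · exact h
      simpa using norm_eq_zero.mp habs
    exact eqOn_of_sphere hf.1 (differentiableOn_const 0) (hr0 0) (hr1 0) hsph hz
  · -- Complete
    intro F hF hCau
    have hucau : ∀ k, ∀ ε : ℝ, 0 < ε → ∃ N, ∀ m ≥ N, ∀ n ≥ N,
        ∀ z ∈ closedBall (0:ℂ) (r k), ‖F m z - F n z‖ ≤ ε := by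
      intro k ε hε
      obtain ⟨N, hN⟩ := hCau (ε * v ((r k : ℝ) : ℂ)) (mul_pos hε (hvr k))
      refine ⟨N, fun m hm n hn => ?_⟩
      apply maxmod (hr0 k) (hr1 k) ((hF m).1.sub (hF n).1)
      intro z hz
      have hthis := hN m hm n hn z (hsphere_ball k z hz)
      rw [hvsphere k z hz] at hthis
      have h2 : ‖F m z - F n z‖ * v ((r k:ℝ):ℂ) ≤ ε * v ((r k:ℝ):ℂ) := by
        rw [mul_comm]; exact hthis
      exact le_of_mul_le_mul_right h2 (hvr k)
    have hbig : ∀ z ∈ ball (0:ℂ) 1, ∃ k, ‖z‖ < r k := by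
      intro z hz
      exact (hrt.eventually (Ioi_mem_nhds (mem_ball_zero_iff.1 hz))).exists
    have hptC : ∀ z ∈ ball (0:ℂ) 1, CauchySeq (fun n => F n z) := by
      intro z hz
      obtain ⟨k, hk⟩ := hbig z hz
      rw [Metric.cauchySeq_iff]
      intro ε hε
      obtain ⟨N, hN⟩ := hucau k (ε/2) (half_pos hε)
      refine ⟨N, fun m hm n hn => ?_⟩
      have := hN m hm n hn z (mem_closedBall_zero_iff.2 (by
        exact hk.le))
      rw [Complex.dist_eq]
      linarith
    set f : ℂ → ℂ := fun z => limUnder atTop (fun n => F n z) with hfdef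
    have hfl : ∀ z ∈ ball (0:ℂ) 1, Tendsto (fun n => F n z) atTop (𝓝 (f z)) :=
      fun z hz => (hptC z hz).tendsto_limUnder
    have htend : HvTendsto (ball (0:ℂ) 1) v F f := by
      intro ε hε
      obtain ⟨N, hN⟩ := hCau ε hε
      refine ⟨N, fun n hn z hz => ?_⟩
      have h1 : Tendsto (fun m => v z * ‖F n z - F m z‖) atTop
          (𝓝 (v z * ‖F n z - f z‖)) := by
        have h2 : Tendsto (fun m => F n z - F m z) atTop (𝓝 (F n z - f z)) :=
          tendsto_const_nhds.sub (hfl z hz)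
        exact ((continuous_norm.tendsto _).comp h2).const_mul (v z)
      exact le_of_tendsto h1 (eventually_atTop.2 ⟨N, fun m hm => hN n hn m hm z hz⟩)
    have htlu : TendstoLocallyUniformlyOn F f atTop (ball (0:ℂ) 1) := by
      rw [tendstoLocallyUniformlyOn_iff]
      intro ε hε x hx
      obtain ⟨k, hk⟩ := hbig x hx
      refine ⟨ball (0:ℂ) (r k), nhdsWithin_le_nhds
        (isOpen_ball.mem_nhds (mem_ball_zero_iff.2 (by exact hk))), ?_⟩
      obtain ⟨N, hN⟩ := hucau k (ε/2) (half_pos hε)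
      refine eventually_atTop.2 ⟨N, fun n hn y hy => ?_⟩
      have hyb : y ∈ ball (0:ℂ) 1 := ball_subset_ball (hr1 k).le hy
      have h1 : Tendsto (fun m => ‖F m y - F n y‖) atTop
          (𝓝 (‖f y - F n y‖)) :=
        (continuous_norm.tendsto _).comp ((hfl y hyb).sub tendsto_const_nhds)
      have h2 : ‖f y - F n y‖ ≤ ε/2 :=
        le_of_tendsto h1 (eventually_atTop.2
          ⟨N, fun m hm => hN m hm n hn y (ball_subset_closedBall hy)⟩)
      rw [Complex.dist_eq]
      linarith
    have hfd : DifferentiableOn ℂ f (ball (0:ℂ) 1) :=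
      htlu.differentiableOn (Eventually.of_forall fun n => (hF n).1) isOpen_ball
    refine ⟨f, ⟨hfd, ?_⟩, htend⟩
    obtain ⟨N, hN⟩ := htend 1 one_pos
    obtain ⟨C, hC⟩ := (hF N).2
    refine ⟨C + 1, fun z hz => ?_⟩
    have h1 := hN N le_rfl z hz
    have h2 := hC z hz
    have h3 : ‖f z‖ ≤ ‖F N z‖ + ‖F N z - f z‖ := by
      calc ‖f z‖ = ‖F N z - (F N z - f z)‖ := by ring_nf
        _ ≤ ‖F N z‖ + ‖F N z - f z‖ := by
            exact (norm_sub_le _ _)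
    have h4 : v z * ‖f z‖ ≤ v z * (‖F N z‖ + ‖F N z - f z‖) :=
      mul_le_mul_of_nonneg_left h3 (hv z hz)
    rw [mul_add] at h4
    linarith

theorem stmt16 (v : ℂ → ℝ) (hv : ∀ z ∈ Metric.ball (0:ℂ) 1, 0 ≤ v z)
    (hbdd : ∃ M : ℝ, ∀ z ∈ Metric.ball (0:ℂ) 1, v z ≤ M)
    (hrad : ∀ z ∈ Metric.ball (0:ℂ) 1, v z = v (‖z‖ : ℝ)) :
    IsBanachHv (Metric.ball (0:ℂ) 1) v ↔
      ∃ r : ℕ → ℝ, StrictMono r ∧ (∀ k, 0 < r k) ∧ (∀ k, r k < 1) ∧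
        Tendsto r atTop (𝓝 1) ∧ ∀ k, 0 < v (r k) := by
  constructor
  · exact fun hB => stmt16_fwd v hv hbdd hrad hB
  · rintro ⟨r, hmono, hr0, hr1, hrt, hvr⟩
    exact stmt16_rev v hv hrad r hmono hr0 hr1 hrt hvr
end
end
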